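/- arXiv:math/0310298 — 3 statements merged into one kernel-verified Lean document; each statement's English description precedes it below -/
import Mathlib

section
/- Define h : ℂ \ ((−∞,−1] ∪ [1,∞)) → ℂ by h(z) = (v(z) − 1)/(v(z) + 1), where v(z) is the principal branch of the square root of (1+z)/(1−z) (well defined since (1+z)/(1−z) avoids (−∞,0] on this domain). Then h is a holomorphic bijection from the doubly slit plane D_1 := ℂ \ ((−∞,−1] ∪ [1,∞)) onto the open unit disk {w ∈ ℂ : |w| < 1}, and h(0) = 0. -/
/-!
`hMap = C ∘ √ ∘ C⁻¹`: the Möbius map `C⁻¹ z = (1 + z)/(1 − z)` sends `D_1` onto the slit plane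
`ℂ \ (−∞, 0]`, the principal square root sends the slit plane onto the right half-plane, and the
Cayley transform `C v = (v − 1)/(v + 1)` sends the right half-plane onto the unit disk. Both Möbius
steps come down to `Re C⁻¹ z = (1 − |z|²)/|1 − z|²` and `Im C⁻¹ z = 2 Im z/|1 − z|²`.
-/

open Complex Set

noncomputable section

/-- The doubly slit plane `ℂ \ ((−∞,−r] ∪ [r,∞))`. -/
def slitPlane2 (r : ℝ) : Set ℂ :=
  (Complex.ofReal '' (Set.Iic (-r) ∪ Set.Ici r))ᶜ

/-- The principal branch of the square root of `(1+z)/(1−z)`. -/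
def vMap (z : ℂ) : ℂ := ((1 + z) / (1 - z)) ^ ((1 : ℂ) / 2)

/-- `h(z) = (v(z) − 1)/(v(z) + 1)`. -/
def hMap (z : ℂ) : ℂ := (vMap z - 1) / (vMap z + 1)

def cayley (v : ℂ) : ℂ := (v - 1) / (v + 1)

def cayleyInv (z : ℂ) : ℂ := (1 + z) / (1 - z)

lemma hMap_eq_cayley_comp_sqrt_comp_cayleyInv : hMap = cayley ∘ Complex.sqrt ∘ cayleyInv := by
  ext z
  simp only [hMap, vMap, cayley, Complex.sqrt, cayleyInv, one_div, Function.comp_apply]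

lemma mem_slitPlane2_one_iff {z : ℂ} :
    z ∈ slitPlane2 1 ↔ z.im ≠ 0 ∨ (-1 < z.re ∧ z.re < 1) := by
  simp only [slitPlane2, mem_compl_iff, mem_image, mem_union, mem_Iic, mem_Ici, not_exists]
  constructor
  · intro h
    by_contra! hz
    exact h z.re ⟨by grind, by simp [Complex.ext_iff, hz.1]⟩
  · rintro h x ⟨hx, rfl⟩
    simp only [ofReal_im, ofReal_re] at h
    grind

section Cayley

lemma cayleyInv_one : cayleyInv 1 = 0 := by
  simp [cayleyInv]

lemma cayley_cayleyInv {z : ℂ} (hz : z ≠ 1) : cayley (cayleyInv z) = z := by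
  have h : 1 - z ≠ 0 := sub_ne_zero.2 hz.symm
  simp only [cayley, cayleyInv]
  field_simp
  ring

lemma cayleyInv_cayley {v : ℂ} (hv : v ≠ -1) : cayleyInv (cayley v) = v := by
  have h : v + 1 ≠ 0 := fun h ↦ hv (eq_neg_of_add_eq_zero_left h)
  simp only [cayley, cayleyInv]
  field_simp
  ring

lemma invOn_cayley_cayleyInv {s t : Set ℂ} (hs : 1 ∉ s) (ht : -1 ∉ t) :
    InvOn cayley cayleyInv s t :=
  ⟨fun _ hz ↦ cayley_cayleyInv (ne_of_mem_of_not_mem hz hs),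
    fun _ hv ↦ cayleyInv_cayley (ne_of_mem_of_not_mem hv ht)⟩

variable {s t : Set ℂ}

lemma bijOn_cayleyInv (hst : ∀ z, cayleyInv z ∈ t ↔ z ∈ s) (h0 : 0 ∉ t) (h1 : -1 ∉ t) :
    BijOn cayleyInv s t := by
  have hs : 1 ∉ s := by rwa [← hst, cayleyInv_one]
  refine (invOn_cayley_cayleyInv hs h1).bijOn (fun z hz ↦ (hst z).2 hz) fun v hv ↦ ?_
  rwa [← hst, cayleyInv_cayley (ne_of_mem_of_not_mem hv h1)]

lemma bijOn_cayley (hst : ∀ z, cayleyInv z ∈ t ↔ z ∈ s) (h0 : 0 ∉ t) (h1 : -1 ∉ t) :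
    BijOn cayley t s :=
  (bijOn_cayleyInv hst h0 h1).symm
    (invOn_cayley_cayleyInv (by rwa [← hst, cayleyInv_one]) h1).symm

lemma re_cayleyInv (z : ℂ) : (cayleyInv z).re = (1 - normSq z) / normSq (1 - z) := by
  rw [cayleyInv, div_re, ← add_div]
  simp only [normSq_apply, add_re, add_im, sub_re, sub_im, one_re, one_im]
  ring

lemma im_cayleyInv (z : ℂ) : (cayleyInv z).im = 2 * z.im / normSq (1 - z) := by
  rw [cayleyInv, div_im, ← sub_div]
  simp only [add_re, add_im, sub_re, sub_im, one_re, one_im]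
  ring

lemma cayleyInv_mem_slitPlane_iff {z : ℂ} : cayleyInv z ∈ slitPlane ↔ z ∈ slitPlane2 1 := by
  rcases eq_or_ne z 1 with rfl | hz
  · simp [cayleyInv_one, mem_slitPlane2_one_iff]
  have hd : 0 < normSq (1 - z) := normSq_pos.2 (sub_ne_zero.2 hz.symm)
  rw [mem_slitPlane_iff, re_cayleyInv, im_cayleyInv, div_pos_iff_of_pos_right hd,
    Ne, div_eq_zero_iff, mem_slitPlane2_one_iff, normSq_apply]
  by_cases him : z.im = 0
  · simp [him, hd.ne', ← abs_lt, ← sq_lt_one_iff_abs_lt_one, sq]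
  · simp [him, hd.ne']

lemma re_cayleyInv_pos_iff {z : ℂ} : 0 < (cayleyInv z).re ↔ z ∈ Metric.ball 0 1 := by
  rcases eq_or_ne z 1 with rfl | hz
  · simp [cayleyInv_one]
  rw [re_cayleyInv, div_pos_iff_of_pos_right (normSq_pos.2 (sub_ne_zero.2 hz.symm)), sub_pos,
    mem_ball_zero_iff, normSq_eq_norm_sq, sq_lt_one_iff₀ (norm_nonneg z)]

lemma bijOn_cayleyInv_slitPlane2_slitPlane : BijOn cayleyInv (slitPlane2 1) slitPlane :=
  bijOn_cayleyInv (fun _ ↦ cayleyInv_mem_slitPlane_iff) zero_notMem_slitPlane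
    (by simp [mem_slitPlane_iff])

lemma bijOn_cayley_rightHalfPlane_ball : BijOn cayley {v | 0 < v.re} (Metric.ball 0 1) :=
  bijOn_cayley (fun _ ↦ re_cayleyInv_pos_iff) (by simp) (by simp)

lemma differentiableOn_cayley : DifferentiableOn ℂ cayley {-1}ᶜ := by
  intro v hv
  have h : v + 1 ≠ 0 := fun h ↦ hv (eq_neg_of_add_eq_zero_left h)
  unfold cayley
  fun_prop (disch := exact h)

lemma differentiableOn_cayleyInv : DifferentiableOn ℂ cayleyInv {1}ᶜ := by
  intro z hz
  have h : 1 - z ≠ 0 := sub_ne_zero.2 (Ne.symm hz)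
  unfold cayleyInv
  fun_prop (disch := exact h)

end Cayley

namespace Complex

lemma sq_sqrt (w : ℂ) : sqrt w ^ 2 = w := by
  exact_mod_cast cpow_nat_inv_pow w two_ne_zero

lemma sqrt_sq {v : ℂ} (hv : 0 < v.re) : sqrt (v ^ 2) = v := by
  have harg := abs_lt.1 (abs_arg_lt_pi_div_two_iff.2 (Or.inl hv))
  exact_mod_cast pow_cpow_nat_inv two_ne_zero (by exact_mod_cast harg.1)
    (by exact_mod_cast harg.2.le)

lemma sq_mem_slitPlane_of_re_pos {v : ℂ} (hv : 0 < v.re) : v ^ 2 ∈ slitPlane := by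
  rw [mem_slitPlane_iff, sq, mul_re, mul_im]
  by_cases him : v.im = 0
  · left
    simp only [him, mul_zero, sub_zero]
    positivity
  · right
    have : v.re * v.im ≠ 0 := mul_ne_zero hv.ne' him
    contrapose! this
    linarith

lemma re_sqrt_pos {w : ℂ} (hw : w ∈ slitPlane) : 0 < (sqrt w).re := by
  rw [sqrt, cpow_inv_two_re, Real.sqrt_pos]
  rcases mem_slitPlane_iff.1 hw with hre | him
  · linarith [norm_nonneg w]
  · linarith [neg_abs_le w.re, abs_re_lt_norm.2 him]

lemma bijOn_sqrt_slitPlane_rightHalfPlane : BijOn sqrt slitPlane {v | 0 < v.re} :=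
  InvOn.bijOn (f' := (· ^ 2)) ⟨fun w _ ↦ sq_sqrt w, fun _ hv ↦ sqrt_sq hv⟩
    (fun _ ↦ re_sqrt_pos) fun _ ↦ sq_mem_slitPlane_of_re_pos

end Complex

theorem hMap_conformal_equiv_slitPlane_unitDisk :
    DifferentiableOn ℂ hMap (slitPlane2 1) ∧
    Set.BijOn hMap (slitPlane2 1) (Metric.ball (0 : ℂ) 1) ∧
    hMap 0 = 0 := by
  have hinv := bijOn_cayleyInv_slitPlane2_slitPlane
  have hsqrt := Complex.bijOn_sqrt_slitPlane_rightHalfPlane.comp hinv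
  rw [hMap_eq_cayley_comp_sqrt_comp_cayleyInv]
  refine ⟨?_, bijOn_cayley_rightHalfPlane_ball.comp hsqrt, by simp [cayley, cayleyInv]⟩
  have hcayley : DifferentiableOn ℂ cayley {v | 0 < v.re} :=
    differentiableOn_cayley.mono <| subset_compl_singleton_iff.2 <| by norm_num
  have hcayleyInv : DifferentiableOn ℂ cayleyInv (slitPlane2 1) :=
    differentiableOn_cayleyInv.mono <| subset_compl_singleton_iff.2 <| by
      simp [mem_slitPlane2_one_iff]
  exact hcayley.comp (differentiableOn_sqrt.comp hcayleyInv hinv.mapsTo) hsqrt.mapsTo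
end
end

section
/- Let U ⊆ ℂ be open, let f : ℂ → ℂ be holomorphic on U and injective on U, and let K ⊆ U be compact. Then there exists M > 0 such that for all z, w ∈ K, |f(z) − f(w)| ≥ M |z − w|. -/
/-!
The difference quotient `(f z - f w) / (z - w)`, extended by `f'` on the diagonal, is continuous
on `U × U` because `f` is strictly differentiable with continuous derivative. It never vanishes:
off the diagonal by injectivity, and on the diagonal because a zero of `f'` of order `n - 1 ≥ 1`
makes `f - f z₀ = φ ^ n` near `z₀` for a local coordinate `φ`, and `u ↦ u ^ n` is not injective
near `0`. Its norm therefore has a positive minimum `M` on the compact set `K × K`.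
-/

open Complex Set Filter Topology

section DSlope

variable {𝕜 E : Type*} [NontriviallyNormedField 𝕜] [NormedAddCommGroup E] [NormedSpace 𝕜 E]
  {f : 𝕜 → E}

theorem continuousAt_dslope_uncurry_of_ne {a b : 𝕜} (hab : a ≠ b) (ha : ContinuousAt f a)
    (hb : ContinuousAt f b) : ContinuousAt (fun p : 𝕜 × 𝕜 => dslope f p.2 p.1) (a, b) := by
  have hslope : ContinuousAt (fun p : 𝕜 × 𝕜 => (p.1 - p.2)⁻¹ • (f p.1 - f p.2)) (a, b) :=
    ((continuousAt_fst.sub continuousAt_snd).inv₀ (sub_ne_zero.mpr hab)).smul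
      ((ha.comp continuousAt_fst).sub (hb.comp continuousAt_snd))
  refine hslope.congr ?_
  filter_upwards [isOpen_ne_fun continuous_fst continuous_snd |>.mem_nhds hab] with p hp
  rw [dslope_of_ne f hp, slope_def_module]

theorem continuousAt_dslope_uncurry_diag {a : 𝕜} (hf : HasStrictDerivAt f (deriv f a) a)
    (hf' : ContinuousAt (deriv f) a) :
    ContinuousAt (fun p : 𝕜 × 𝕜 => dslope f p.2 p.1) (a, a) := by
  let D : Set (𝕜 × 𝕜) := {p | p.1 = p.2}
  rw [← continuousWithinAt_univ, ← union_compl_self D, continuousWithinAt_union]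
  constructor
  · refine (hf'.comp continuousAt_fst).continuousWithinAt.congr (fun p (hp : p.1 = p.2) => ?_) ?_
    · simp [hp, dslope_same]
    · simp [dslope_same]
  · have := hf.isLittleO.tendsto_inv_smul_nhds_zero.add_const (deriv f a)
    refine ContinuousWithinAt.congr (f := fun p : 𝕜 × 𝕜 =>
      (p.1 - p.2)⁻¹ • (f p.1 - f p.2 - (p.1 - p.2) • deriv f a) + deriv f a) ?_ ?_ ?_
    · simpa [ContinuousWithinAt] using this.mono_left nhdsWithin_le_nhds
    · intro p (hp : p.1 ≠ p.2)
      rw [dslope_of_ne f hp, slope_def_module, smul_sub (p.1 - p.2)⁻¹ (f p.1 - f p.2),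
        inv_smul_smul₀ (sub_ne_zero.mpr hp), sub_add_cancel]
    · simp [dslope_same]

theorem AnalyticOnNhd.continuousOn_dslope_uncurry [CompleteSpace E] {s : Set 𝕜}
    (hf : AnalyticOnNhd 𝕜 f s) : ContinuousOn (fun p : 𝕜 × 𝕜 => dslope f p.2 p.1) (s ×ˢ s) := by
  rintro ⟨a, b⟩ ⟨ha, hb⟩
  refine ContinuousAt.continuousWithinAt ?_
  rcases eq_or_ne a b with rfl | hab
  · exact continuousAt_dslope_uncurry_diag (hf a ha).hasStrictDerivAt (hf.deriv a ha).continuousAt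
  · exact continuousAt_dslope_uncurry_of_ne hab (hf a ha).continuousAt (hf b hb).continuousAt

theorem dslope_ne_zero_of_injOn {s : Set 𝕜} (hinj : InjOn f s) (hf : ∀ x ∈ s, deriv f x ≠ 0)
    {a b : 𝕜} (ha : a ∈ s) (hb : b ∈ s) : dslope f a b ≠ 0 := by
  rcases eq_or_ne b a with rfl | hab
  · rw [dslope_same]
    exact hf b hb
  · intro h0
    have := sub_smul_dslope f a b
    rw [h0, smul_zero, eq_comm, sub_eq_zero] at this
    exact hab (hinj hb ha this)

end DSlope

theorem not_injOn_pow_of_mem_nhds_zero {n : ℕ} (hn : 2 ≤ n) {W : Set ℂ} (hW : W ∈ 𝓝 0) :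
    ¬InjOn (· ^ n) W := by
  intro hinj
  set ζ := exp (2 * Real.pi * I / n)
  have hζ : IsPrimitiveRoot ζ n := isPrimitiveRoot_exp n (by omega)
  have hζW : ∀ᶠ t in 𝓝 (0 : ℂ), ζ * t ∈ W :=
    (continuous_const_mul ζ).tendsto' 0 0 (mul_zero ζ) hW
  have hnear : ∀ᶠ t in 𝓝[≠] (0 : ℂ), t ∈ W ∧ ζ * t ∈ W :=
    nhdsWithin_le_nhds (Filter.Eventually.and hW hζW)
  obtain ⟨t, ⟨htW, hζtW⟩, ht0⟩ := (hnear.and self_mem_nhdsWithin).exists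
  have hpow : (ζ * t) ^ n = t ^ n := by rw [mul_pow, hζ.pow_eq_one, one_mul]
  have : ζ * t = 1 * t := hinj hζtW htW hpow |>.trans (one_mul t).symm
  exact hζ.ne_one (by omega) (mul_right_cancel₀ ht0 this)

theorem AnalyticAt.exists_analyticAt_pow_eq {h : ℂ → ℂ} {z₀ : ℂ} (hh : AnalyticAt ℂ h z₀)
    (h₀ : h z₀ ≠ 0) {n : ℕ} (hn : n ≠ 0) :
    ∃ r : ℂ → ℂ, AnalyticAt ℂ r z₀ ∧ ∀ z, r z ^ n = h z := by
  -- normalising by `h z₀` keeps the argument of the root inside the slit plane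
  refine ⟨fun z => h z₀ ^ (n⁻¹ : ℂ) * (h z / h z₀) ^ (n⁻¹ : ℂ), ?_, fun z => ?_⟩
  · refine analyticAt_const.mul ((hh.div analyticAt_const h₀).cpow analyticAt_const ?_)
    simp [h₀]
  · rw [mul_pow, cpow_nat_inv_pow _ hn, cpow_nat_inv_pow _ hn, mul_div_cancel₀ _ h₀]

theorem AnalyticAt.exists_eventuallyEq_pow_of_analyticOrderAt_eq {g : ℂ → ℂ} {z₀ : ℂ}
    (hg : AnalyticAt ℂ g z₀) {n : ℕ} (hn : n ≠ 0) (hord : analyticOrderAt g z₀ = n) :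
    ∃ φ : ℂ → ℂ, map φ (𝓝 z₀) = 𝓝 0 ∧ g =ᶠ[𝓝 z₀] fun z => φ z ^ n := by
  obtain ⟨h, hh, h₀, hgh⟩ := hg.analyticOrderAt_eq_natCast.mp hord
  obtain ⟨r, hr, hrh⟩ := hh.exists_analyticAt_pow_eq h₀ hn
  have hr₀ : r z₀ ≠ 0 := fun h' => h₀ (by rw [← hrh, h', zero_pow hn])
  have hφ : HasStrictDerivAt (fun z => (z - z₀) * r z) (r z₀) z₀ := by
    simpa using HasStrictDerivAt.fun_mul (((hasStrictDerivAt_id z₀).sub_const z₀))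
      hr.hasStrictDerivAt
  refine ⟨fun z => (z - z₀) * r z, by simpa using hφ.map_nhds_eq hr₀, ?_⟩
  filter_upwards [hgh] with z hz
  rw [hz, smul_eq_mul, mul_pow, hrh]

theorem AnalyticAt.deriv_ne_zero_of_injOn {f : ℂ → ℂ} {z₀ : ℂ} {V : Set ℂ}
    (hf : AnalyticAt ℂ f z₀) (hV : V ∈ 𝓝 z₀) (hinj : InjOn f V) : deriv f z₀ ≠ 0 := by
  intro hd
  have hg : AnalyticAt ℂ (f · - f z₀) z₀ := hf.sub analyticAt_const
  have hord_ne_top : analyticOrderAt (f · - f z₀) z₀ ≠ ⊤ := by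
    intro htop
    obtain ⟨z, ⟨hz, hzV⟩, hne⟩ := ((analyticOrderAt_eq_top.mp htop).and hV
      |>.filter_mono nhdsWithin_le_nhds |>.and (self_mem_nhdsWithin (s := {z₀}ᶜ))).exists
    exact hne (hinj hzV (mem_of_mem_nhds hV) (sub_eq_zero.mp hz))
  obtain ⟨n, hn⟩ := ENat.ne_top_iff_exists.mp hord_ne_top
  have hn2 : 2 ≤ n := by
    have h1 : 1 ≤ analyticOrderAt (deriv f) z₀ :=
      Order.one_le_iff_ne_zero.mpr fun h0 => (hf.deriv.analyticOrderAt_eq_zero.mp h0) hd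
    have := hf.analyticOrderAt_deriv_add_one
    rw [← hn] at this
    have h2 : (2 : ℕ∞) ≤ n := by rw [← this]; exact add_le_add_left h1 1
    exact_mod_cast h2
  obtain ⟨φ, hφ, hgφ⟩ := hg.exists_eventuallyEq_pow_of_analyticOrderAt_eq (by omega) hn.symm
  refine not_injOn_pow_of_mem_nhds_zero hn2 (hφ ▸ image_mem_map (inter_mem hV hgφ)) ?_
  rintro _ ⟨z, ⟨hzV, hz⟩, rfl⟩ _ ⟨w, ⟨hwV, hw⟩, rfl⟩ hzw
  have : f z = f w := sub_left_injective (hz.trans (hzw.trans hw.symm))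
  rw [hinj hzV hwV this]

theorem injective_holomorphic_bilipschitz_below_on_compact
    {U : Set ℂ} (hU : IsOpen U) (f : ℂ → ℂ)
    (hf : DifferentiableOn ℂ f U) (hinj : Set.InjOn f U)
    {K : Set ℂ} (hK : IsCompact K) (hKU : K ⊆ U) :
    ∃ M : ℝ, 0 < M ∧ ∀ z ∈ K, ∀ w ∈ K,
      M * ‖z - w‖ ≤ ‖f z - f w‖ := by
  have hfa : AnalyticOnNhd ℂ f U := hf.analyticOnNhd hU
  have hderiv : ∀ z ∈ U, deriv f z ≠ 0 := fun z hz =>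
    (hfa z hz).deriv_ne_zero_of_injOn (hU.mem_nhds hz) hinj
  have hcont : ContinuousOn (fun p : ℂ × ℂ => ‖dslope f p.2 p.1‖) (K ×ˢ K) :=
    continuous_norm.comp_continuousOn (hfa.continuousOn_dslope_uncurry.mono (prod_mono hKU hKU))
  obtain ⟨M, hM, hMle⟩ := (hK.prod hK).exists_forall_le' hcont fun p hp =>
    norm_pos_iff.mpr (dslope_ne_zero_of_injOn hinj hderiv (hKU hp.2) (hKU hp.1))
  refine ⟨M, hM, fun z hz w hw => ?_⟩
  calc M * ‖z - w‖ ≤ ‖dslope f w z‖ * ‖z - w‖ := by gcongr; exact hMle (z, w) ⟨hz, hw⟩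
    _ = ‖f z - f w‖ := by rw [← sub_smul_dslope, norm_smul, mul_comm]
end

section
/- Define h : (−1,1) → ℝ by h(x) = (√((1+x)/(1−x)) − 1)/(√((1+x)/(1−x)) + 1). There exists a constant A < ∞ such that for every r_3 ≥ 2 and every x_0 ∈ ℝ with |x_0| < r_3, one has −∫_{−1}^{1} (1/π) log |h(z/r_3) − h(x_0/r_3)| dz ≤ (2/π) log r_3 + A. -/
/-! Writing `p = √((1+x)/(1-x))`, one has `x = (p² - 1)/(p² + 1)` and
`hFun x = (p - 1)/(p + 1)`, and comparing these two Cayley transforms gives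
`|a - b| ≤ 2 |hFun a - hFun b|` on `(-1, 1)`. Hence
`log |hFun (z/r₃) - hFun (x₀/r₃)| ≥ log |z - x₀| - log (2 r₃)`, and the integral of
`log |z - x₀|` over `[-1, 1]` is at least its value `-2` at `x₀ = 0`. -/

open Real Set

noncomputable section

/-- `h(x) = (√((1+x)/(1−x)) − 1)/(√((1+x)/(1−x)) + 1)`. -/
def hFun (x : ℝ) : ℝ :=
  (Real.sqrt ((1 + x) / (1 - x)) - 1) / (Real.sqrt ((1 + x) / (1 - x)) + 1)

theorem mul_log_one_sub_add_mul_log_one_add_nonneg (c : ℝ) :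
    0 ≤ (1 - c) * log (1 - c) + (1 + c) * log (1 + c) := by
  wlog hc : 0 ≤ c generalizing c
  · have := this (-c) (by linarith)
    rw [sub_neg_eq_add, ← sub_eq_add_neg] at this
    linarith
  rcases le_total c 1 with hc1 | hc1
  · linarith [self_sub_one_le_mul_log (by linarith : 0 ≤ 1 - c),
      self_sub_one_le_mul_log (by linarith : 0 ≤ 1 + c)]
  · have hneg : (1 - c) * log (1 - c) = -((c - 1) * log (c - 1)) := by
      rw [← neg_sub, log_neg_eq_log]; ring
    rw [hneg, neg_add_eq_sub, sub_nonneg]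
    rcases le_total (c - 1) 1 with hc2 | hc2
    · exact (mul_log_nonpos (by linarith) hc2).trans (mul_log_nonneg (by linarith))
    · have : 0 ≤ log (c - 1) := log_nonneg hc2
      gcongr <;> linarith

theorem neg_two_le_integral_log_abs_sub (x₀ : ℝ) :
    -2 ≤ ∫ z in (-1 : ℝ)..1, log |z - x₀| := by
  simp only [log_abs]
  rw [intervalIntegral.integral_comp_sub_right (fun z => log z), integral_log,
    show -1 - x₀ = -(1 + x₀) by ring, log_neg_eq_log]
  linarith [mul_log_one_sub_add_mul_log_one_add_nonneg x₀]

theorem neg_integral_log_abs_sub_le {f : ℝ → ℝ} {x₀ c : ℝ} (hc : 0 < c) (hc1 : c ≤ 1)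
    (hf : ∀ z ∈ Icc (-1 : ℝ) 1, c * |z - x₀| ≤ |f z - f x₀|) :
    -∫ z in (-1 : ℝ)..1, log |f z - f x₀| ≤ 2 - 2 * log c := by
  have hlogc : log c ≤ 0 := log_nonpos hc.le hc1
  by_cases hint :
      IntervalIntegrable (fun z => log |f z - f x₀|) MeasureTheory.volume (-1) 1
  · have hlog : IntervalIntegrable (fun z => log |z - x₀|) MeasureTheory.volume (-1) 1 := by
      simpa only [log_abs, neg_add_cancel_right, sub_add_cancel] using
        (intervalIntegral.intervalIntegrable_log' (a := -1 - x₀) (b := 1 - x₀)).comp_sub_right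
          x₀
    have hpt : ∀ z ∈ Icc (-1 : ℝ) 1, log c + log |z - x₀| ≤ log |f z - f x₀| := by
      intro z hz
      rcases eq_or_ne z x₀ with rfl | hzx
      · simpa using hlogc -- `log 0 = 0` on the right
      · rw [← log_mul hc.ne' (abs_pos.2 (sub_ne_zero.2 hzx)).ne']
        exact log_le_log (by positivity) (hf z hz)
    have hmono := intervalIntegral.integral_mono_on (by norm_num)
      (intervalIntegrable_const.add hlog) hint hpt
    rw [intervalIntegral.integral_add intervalIntegrable_const hlog,
      intervalIntegral.integral_const, smul_eq_mul] at hmono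
    linarith [neg_two_le_integral_log_abs_sub x₀]
  · -- the integral then has the junk value `0`
    rw [intervalIntegral.integral_undef hint, neg_zero]
    linarith

theorem cayley_sq_sub_le_two_mul_cayley_sub {p q : ℝ} (hq : 0 < q) (hqp : q ≤ p) :
    (p ^ 2 - 1) / (p ^ 2 + 1) - (q ^ 2 - 1) / (q ^ 2 + 1)
      ≤ 2 * ((p - 1) / (p + 1) - (q - 1) / (q + 1)) := by
  have hp : 0 < p := hq.trans_le hqp
  rw [div_sub_div _ _ (by positivity) (by positivity),
    div_sub_div _ _ (by positivity) (by positivity), mul_div_assoc',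
    div_le_div_iff₀ (by positivity) (by positivity)]
  have key : (p + q) * ((p + 1) * (q + 1)) ≤ 2 * ((p ^ 2 + 1) * (q ^ 2 + 1)) := by
    nlinarith [sq_nonneg (p - q), sq_nonneg (p * q - 1), sq_nonneg (p - 1), sq_nonneg (q - 1),
      mul_pos hp hq]
  nlinarith [mul_le_mul_of_nonneg_left key (sub_nonneg.2 hqp), mul_pos hp hq]

theorem eq_cayley_sq_sqrt {x : ℝ} (hx : x ∈ Ioo (-1 : ℝ) 1) :
    x = (√((1 + x) / (1 - x)) ^ 2 - 1) / (√((1 + x) / (1 - x)) ^ 2 + 1) := by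
  have h₁ : 0 < 1 - x := by linarith [hx.2]
  rw [sq_sqrt (div_nonneg (by linarith [hx.1]) h₁.le)]
  field_simp
  ring

theorem sub_le_two_mul_hFun_sub {a b : ℝ} (ha : a ∈ Ioo (-1 : ℝ) 1)
    (hb : b ∈ Ioo (-1 : ℝ) 1) (hba : b ≤ a) : a - b ≤ 2 * (hFun a - hFun b) := by
  have hq : 0 < √((1 + b) / (1 - b)) :=
    sqrt_pos.2 (div_pos (by linarith [hb.1]) (by linarith [hb.2]))
  have hqp : √((1 + b) / (1 - b)) ≤ √((1 + a) / (1 - a)) := by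
    apply sqrt_le_sqrt
    rw [div_le_div_iff₀ (by linarith [hb.2]) (by linarith [ha.2])]
    nlinarith
  calc a - b
      = (√((1 + a) / (1 - a)) ^ 2 - 1) / (√((1 + a) / (1 - a)) ^ 2 + 1)
        - (√((1 + b) / (1 - b)) ^ 2 - 1) / (√((1 + b) / (1 - b)) ^ 2 + 1) := by
        rw [← eq_cayley_sq_sqrt ha, ← eq_cayley_sq_sqrt hb]
    _ ≤ 2 * (hFun a - hFun b) := cayley_sq_sub_le_two_mul_cayley_sub hq hqp

theorem abs_sub_le_two_mul_abs_hFun_sub {a b : ℝ} (ha : a ∈ Ioo (-1 : ℝ) 1)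
    (hb : b ∈ Ioo (-1 : ℝ) 1) : |a - b| ≤ 2 * |hFun a - hFun b| := by
  wlog hba : b ≤ a generalizing a b
  · rw [abs_sub_comm, abs_sub_comm (hFun a)]
    exact this hb ha (le_of_not_ge hba)
  have h := sub_le_two_mul_hFun_sub ha hb hba
  rw [abs_of_nonneg (sub_nonneg.2 hba), abs_of_nonneg (by linarith)]
  exact h

theorem log_integral_bound_for_hFun :
    ∃ A : ℝ, ∀ r₃ : ℝ, 2 ≤ r₃ → ∀ x₀ : ℝ, |x₀| < r₃ →
      -∫ z in (-1 : ℝ)..1, (1 / Real.pi) * Real.log |hFun (z / r₃) - hFun (x₀ / r₃)|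
        ≤ (2 / Real.pi) * Real.log r₃ + A := by
  refine ⟨(2 + 2 * log 2) / π, fun r₃ hr x₀ hx => ?_⟩
  have hr0 : 0 < r₃ := by linarith
  have hIoo : ∀ y, |y| < r₃ → y / r₃ ∈ Ioo (-1 : ℝ) 1 := fun y hy => by
    rw [mem_Ioo, lt_div_iff₀ hr0, div_lt_iff₀ hr0]
    constructor <;> linarith [abs_lt.1 hy]
  have hco : ∀ z ∈ Icc (-1 : ℝ) 1,
      (2 * r₃)⁻¹ * |z - x₀| ≤ |hFun (z / r₃) - hFun (x₀ / r₃)| := fun z hz => by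
    have h := abs_sub_le_two_mul_abs_hFun_sub
      (hIoo z ((abs_le.2 hz).trans_lt (by linarith))) (hIoo x₀ hx)
    rw [← sub_div, abs_div, abs_of_pos hr0, div_le_iff₀ hr0] at h
    rw [inv_mul_eq_div, div_le_iff₀ (by positivity)]
    linarith
  have key := neg_integral_log_abs_sub_le (f := fun z => hFun (z / r₃)) (by positivity)
    (inv_le_one_of_one_le₀ (by linarith)) hco
  rw [log_inv, log_mul two_ne_zero hr0.ne'] at key
  rw [intervalIntegral.integral_const_mul]
  calc -(1 / π * ∫ z in (-1 : ℝ)..1, log |hFun (z / r₃) - hFun (x₀ / r₃)|)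
      = (-∫ z in (-1 : ℝ)..1, log |hFun (z / r₃) - hFun (x₀ / r₃)|) / π := by ring
    _ ≤ (2 - 2 * -(log 2 + log r₃)) / π := by gcongr
    _ = 2 / π * log r₃ + (2 + 2 * log 2) / π := by ring
end
end
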